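/- Let 𝒟 be a dense subset of the tree Hechler poset ℍ and let S := {stem(T) : T ∈ 𝒟}. Then every finite sequence t ∈ ℕ^{<ω} is S-reachable. -/

import Mathlib

namespace GCH

/-! ### Turing reducibility -/

/-- `RecursiveIn O f` : the partial function `f : ℕ →. ℕ` is partial recursive relative
to the oracle `O`.  This is the relativization of `Nat.Partrec`. -/
inductive RecursiveIn (O : ℕ →. ℕ) : (ℕ →. ℕ) → Prop
  | oracle : RecursiveIn O O
  | zero : RecursiveIn O (pure 0)
  | succ : RecursiveIn O ↑Nat.succ
  | left : RecursiveIn O ↑fun n : ℕ => n.unpair.1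
  | right : RecursiveIn O ↑fun n : ℕ => n.unpair.2
  | pair {f g} : RecursiveIn O f → RecursiveIn O g →
      RecursiveIn O fun n => Nat.pair <$> f n <*> g n
  | comp {f g} : RecursiveIn O f → RecursiveIn O g →
      RecursiveIn O fun n => g n >>= f
  | prec {f g} : RecursiveIn O f → RecursiveIn O g →
      RecursiveIn O (Nat.unpaired fun a n =>
        n.rec (f a) fun y IH => do let i ← IH; g (Nat.pair a (Nat.pair y i)))
  | rfind {f} : RecursiveIn O f →
      RecursiveIn O fun a => Nat.rfind fun n => (fun m => m = 0) <$> f (Nat.pair a n)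

/-- Turing reducibility `f ≤_T g` for total functions `ℕ → ℕ`. -/
def TuringReducible (f g : ℕ → ℕ) : Prop :=
  RecursiveIn (g : ℕ →. ℕ) (f : ℕ →. ℕ)

/-- The Turing join `a ⊕ b` : `(a ⊕ b)(2n) = a(n)`, `(a ⊕ b)(2n+1) = b(n)`. -/
def join (a b : ℕ → ℕ) : ℕ → ℕ := fun n =>
  if n % 2 = 0 then a (n / 2) else b (n / 2)

open Classical in
/-- The characteristic function of `A ⊆ ℕ`. -/
noncomputable def chi (A : Set ℕ) : ℕ → ℕ := fun n => if n ∈ A then 1 else 0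

/-! ### The tree Hechler poset `ℍ` -/

/-- A condition in the tree Hechler poset `ℍ` : a nonempty tree `T ⊆ ℕ^{<ω}` closed under
initial segments, having a stem (the longest node comparable with every node of the tree),
such that every node extending the stem has cofinitely many immediate successors.
The order is inclusion of trees: `T' ≤ T` iff `T'.tree ⊆ T.tree`. -/
structure Hechler where
  /-- the underlying set of finite sequences -/
  tree : Set (List ℕ)
  nonempty : tree.Nonempty
  /-- closed under initial segments -/
  closed : ∀ ⦃s t : List ℕ⦄, s <+: t → t ∈ tree → s ∈ tree
  /-- the stem -/
  stem : List ℕ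
  stem_mem : stem ∈ tree
  /-- the stem is comparable with every node of the tree -/
  stem_comparable : ∀ t ∈ tree, stem <+: t ∨ t <+: stem
  /-- the stem is the longest node comparable with every node of the tree -/
  stem_longest : ∀ s ∈ tree, (∀ t ∈ tree, s <+: t ∨ t <+: s) → s.length ≤ stem.length
  /-- every node extending the stem has cofinitely many immediate successors -/
  succ_cofinite : ∀ t ∈ tree, stem <+: t → {z : ℕ | t ++ [z] ∉ tree}.Finite

/-- `D ⊆ ℍ` is dense: every condition has a subset in `D`. -/
def HDense (D : Set Hechler) : Prop := ∀ T : Hechler, ∃ T' ∈ D, T'.tree ⊆ T.tree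

/-- `D ⊆ ℍ` is open: any condition included in a member of `D` is in `D`. -/
def HOpen (D : Set Hechler) : Prop :=
  ∀ T T' : Hechler, T'.tree ⊆ T.tree → T ∈ D → T' ∈ D

/-- The set of stems of members of `D`. -/
def stems (D : Set Hechler) : Set (List ℕ) := {s | ∃ T ∈ D, T.stem = s}

open Classical in
/-- `ReachAt S α t` : `t` is `α`-`S`-reachable.  `t` is `0`-`S`-reachable iff `t ∈ S`;
for `α > 0`, `t` is `α`-`S`-reachable iff infinitely many `z` are such that `t ⌢ z` is
`β`-`S`-reachable for some `β < α`. -/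
noncomputable def ReachAt (S : Set (List ℕ)) (α : Ordinal.{0}) (t : List ℕ) : Prop :=
  if α = 0 then t ∈ S
  else {z : ℕ | ∃ β : Ordinal.{0}, ∃ _ : β < α, ReachAt S β (t ++ [z])}.Infinite
termination_by α

/-- `t` is `S`-reachable iff it is `α`-`S`-reachable for some ordinal `α`. -/
def SReachable (S : Set (List ℕ)) (t : List ℕ) : Prop := ∃ α : Ordinal.{0}, ReachAt S α t

/-- `t' ⊒_A t` : `t'` extends `t` and takes no new value in `A`. -/
def ExtOutside (A : Set ℕ) (t t' : List ℕ) : Prop :=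
  t <+: t' ∧ ∀ (k : ℕ) (h : k < t'.length), t.length ≤ k → t'.get ⟨k, h⟩ ∉ A

/-- The union of the stems of the `T i` is the total function `g : ℕ → ℕ`:
each stem is an initial segment of `g` and the stem lengths are unbounded. -/
def stemsUnion (T : ℕ → Hechler) (g : ℕ → ℕ) : Prop :=
  (∀ (i k : ℕ) (h : k < (T i).stem.length), (T i).stem.get ⟨k, h⟩ = g k) ∧
    ∀ n : ℕ, ∃ i, n < (T i).stem.length

open Classical in
/-- The real `A`-encoded by `g` (relative to the fixed function `θ`):
its `i`-th value is `η_A(g(n_i))` where `n_0 < n_1 < ⋯` enumerates `{n | g n ∈ A}`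
and `η_A = θ ∘ e_A⁻¹` with `e_A` the increasing enumeration of `A`. -/
noncomputable def encodedReal (θ : ℕ → ℕ) (A : Set ℕ) (g : ℕ → ℕ) : ℕ → ℕ :=
  fun i => θ (Nat.count (· ∈ A) (g (Nat.nth (fun n => g n ∈ A) i)))

/-! If `t` were not reachable, the non-reachable nodes would form a set in which every node has
cofinitely many immediate successors, since a node with infinitely many reachable immediate
successors is itself reachable. Hence the nodes comparable with `t` all of whose extensions of `t`
are non-reachable form a condition of `ℍ` with stem `t`. A condition of `D` below it has a stem
extending `t`; that stem lies in `S`, so it is reachable, a contradiction. -/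

theorem List.getElem_eq_of_prefix_or_prefix {α : Type*} {l₁ l₂ : List α}
    (h : l₁ <+: l₂ ∨ l₂ <+: l₁) {n : ℕ} (h₁ : n < l₁.length) (h₂ : n < l₂.length) :
    l₁[n] = l₂[n] :=
  h.elim (fun h => h.getElem h₁) (fun h => (h.getElem h₂).symm)

theorem sReachable_of_mem {S : Set (List ℕ)} {s : List ℕ} (hs : s ∈ S) : SReachable S s :=
  ⟨0, by rwa [ReachAt, if_pos rfl]⟩

theorem finite_setOf_sReachable_append {S : Set (List ℕ)} {s : List ℕ}
    (hs : ¬ SReachable S s) : {z : ℕ | SReachable S (s ++ [z])}.Finite := by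
  by_contra hinf
  choose! α hα using fun z (hz : SReachable S (s ++ [z])) => hz
  refine hs ⟨⨆ z, α z + 1, ?_⟩
  have hne : ⨆ z, α z + 1 ≠ 0 := (pos_of_gt (Ordinal.lt_iSup_add_one α 0)).ne'
  rw [ReachAt, if_neg hne]
  exact Set.Infinite.mono (fun z hz => ⟨α z, Ordinal.lt_iSup_add_one α z, hα z hz⟩) hinf

namespace Hechler

theorem infinite_setOf_stem_append_mem (T : Hechler) :
    {z : ℕ | T.stem ++ [z] ∈ T.tree}.Infinite := by
  simpa only [Set.compl_ofPred, not_not] using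
    (T.succ_cofinite T.stem T.stem_mem List.prefix_rfl).infinite_compl

theorem eq_stem_getElem_of_append_mem (T : Hechler) {s : List ℕ} {z : ℕ}
    (hs : s.length < T.stem.length) (hz : s ++ [z] ∈ T.tree) : z = T.stem[s.length] := by
  have := List.getElem_eq_of_prefix_or_prefix (T.stem_comparable _ hz)
    (n := s.length) hs (by simp)
  simpa using this.symm

theorem stem_prefix_stem_of_subset {T T' : Hechler} (h : T'.tree ⊆ T.tree) :
    T.stem <+: T'.stem := by
  rcases T.stem_comparable _ (h T'.stem_mem) with hpre | hpre
  · exact hpre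
  by_cases heq : T'.stem = T.stem
  · exact heq ▸ List.prefix_rfl
  exfalso
  have hlt : T'.stem.length < T.stem.length :=
    lt_of_le_of_ne hpre.length_le fun hl => heq (hpre.eq_of_length hl)
  refine T'.infinite_setOf_stem_append_mem ((Set.finite_singleton T.stem[T'.stem.length]).subset ?_)
  exact fun z hz => T.eq_stem_getElem_of_append_mem hlt (h hz)

section coneTree

variable {t : List ℕ} {B : Set (List ℕ)}

def coneTree (t : List ℕ) (B : Set (List ℕ)) : Set (List ℕ) :=
  {s | (s <+: t ∨ t <+: s) ∧ ∀ u, t <+: u → u <+: s → u ∈ B}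

theorem mem_coneTree_self (ht : t ∈ B) : t ∈ coneTree t B :=
  ⟨Or.inl List.prefix_rfl, fun _ htu hut =>
    hut.eq_of_length (hut.length_le.antisymm htu.length_le) ▸ ht⟩

theorem coneTree_prefix_closed ⦃s u : List ℕ⦄ (hsu : s <+: u) (hu : u ∈ coneTree t B) :
    s ∈ coneTree t B :=
  ⟨hu.1.elim (fun hut => Or.inl (hsu.trans hut)) (List.prefix_or_prefix_of_prefix hsu),
    fun v htv hvs => hu.2 v htv (hvs.trans hsu)⟩

theorem mem_of_mem_coneTree {s : List ℕ} (hs : s ∈ coneTree t B) (hts : t <+: s) : s ∈ B :=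
  hs.2 s hts List.prefix_rfl

theorem append_mem_coneTree {s : List ℕ} {z : ℕ} (hs : s ∈ coneTree t B) (hts : t <+: s)
    (hz : s ++ [z] ∈ B) : s ++ [z] ∈ coneTree t B :=
  ⟨Or.inr (hts.trans (List.prefix_append _ _)), fun u htu hu =>
    (List.prefix_concat_iff.1 hu).elim (fun h => h ▸ hz) (hs.2 u htu)⟩

theorem length_le_of_forall_comparable_coneTree (hB : ∀ s ∈ B, {z : ℕ | s ++ [z] ∉ B}.Finite)
    (ht : t ∈ B) {s : List ℕ} (hcomp : ∀ u ∈ coneTree t B, s <+: u ∨ u <+: s) :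
    s.length ≤ t.length := by
  by_contra! hlt
  have hinf : {z : ℕ | t ++ [z] ∈ coneTree t B}.Infinite :=
    (hB t ht).infinite_compl.mono fun z hz =>
      append_mem_coneTree (mem_coneTree_self ht) List.prefix_rfl (not_not.1 hz)
  refine hinf ((Set.finite_singleton s[t.length]).subset fun z hz => ?_)
  simpa using (List.getElem_eq_of_prefix_or_prefix (hcomp _ hz) (n := t.length) hlt (by simp)).symm

def ofCofinite (hB : ∀ s ∈ B, {z : ℕ | s ++ [z] ∉ B}.Finite) (ht : t ∈ B) : Hechler where
  tree := coneTree t B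
  nonempty := ⟨t, mem_coneTree_self ht⟩
  closed := coneTree_prefix_closed
  stem := t
  stem_mem := mem_coneTree_self ht
  stem_comparable _ hs := hs.1.symm
  stem_longest _ _ hcomp := length_le_of_forall_comparable_coneTree hB ht hcomp
  succ_cofinite s hs hts := (hB s (mem_of_mem_coneTree hs hts)).subset fun _ hz hzB =>
    hz (append_mem_coneTree hs hts hzB)

end coneTree

end Hechler

/-- Every finite sequence is reachable for the set of stems of a dense set. -/
theorem reachable_of_dense (D : Set Hechler) (hdense : HDense D) (t : List ℕ) :
    SReachable (stems D) t := by
  by_contra ht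
  obtain ⟨T, hTD, hsub⟩ := hdense (Hechler.ofCofinite (B := {s | ¬ SReachable (stems D) s})
    (fun s hs => by simpa only [Set.mem_ofPred_eq, not_not] using
      finite_setOf_sReachable_append hs) ht)
  have hstem : t <+: T.stem := Hechler.stem_prefix_stem_of_subset hsub
  exact Hechler.mem_of_mem_coneTree (hsub T.stem_mem) hstem (sReachable_of_mem ⟨T, hTD, rfl⟩)

end GCH
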